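/- arXiv:2604.23234 — 12 statements merged into one kernel-verified Lean document; each statement's English description precedes it below -/
import Mathlib

section
/- Let X be a set, i an interior operator on X, and d a T_d-derivative operator on X satisfying the ◇-regularity condition d ∘ i = i ∘ d ∘ i. Then for all i-open sets A, B ⊆ X: i(d(A ∪ B)) = i(d(A)) ∪ i(d(B)). (This is Proposition 4.2(1): every ◇-regular polyderivative CK4-space validates the axiom DP: ◇(φ∨ψ) → ◇φ ∨ ◇ψ.) -/
/-! ◇-regularity says that `d` maps `i`-open sets to `i`-open sets, and `i`-open sets are closed
under binary unions. Hence `A ∪ B`, `d A`, `d B` and `d (A ∪ B) = d A ∪ d B` are all `i`-open,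
and both sides of DP equal `d A ∪ d B`. -/

open Function

section InteriorOperator

variable {X : Type*} {i : Set X → Set X}

theorem monotone_of_map_inter (hi_inter : ∀ A B : Set X, i (A ∩ B) = i A ∩ i B) : Monotone i :=
  fun A B hAB => by
    rw [← Set.inter_eq_left.mpr hAB, hi_inter]
    exact Set.inter_subset_right

theorem isFixedPt_union_of_map_inter (hi_inter : ∀ A B : Set X, i (A ∩ B) = i A ∩ i B)
    (hi_le : ∀ A : Set X, i A ⊆ A) {A B : Set X} (hA : IsFixedPt i A) (hB : IsFixedPt i B) :
    IsFixedPt i (A ∪ B) := by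
  refine (hi_le _).antisymm ?_
  calc A ∪ B = i A ∪ i B := by rw [hA.eq, hB.eq]
    _ ⊆ i (A ∪ B) := (monotone_of_map_inter hi_inter).le_map_sup A B

theorem isFixedPt_map_of_regular {d : Set X → Set X} (hreg : ∀ A : Set X, d (i A) = i (d (i A)))
    {A : Set X} (hA : IsFixedPt i A) : IsFixedPt i (d A) := by
  have h := hreg A
  rw [hA.eq] at h
  exact h.symm

end InteriorOperator

theorem validates_DP_general {X : Type*} (i d : Set X → Set X)
    -- `i` is an interior operator
    (hi_inter : ∀ A B : Set X, i (A ∩ B) = i A ∩ i B)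
    (hi_le : ∀ A : Set X, i A ⊆ A)
    -- `d` is a `T_d`-derivative operator
    (hd_union : ∀ A B : Set X, d (A ∪ B) = d A ∪ d B)
    -- ◇-regularity
    (hreg : ∀ A : Set X, d (i A) = i (d (i A))) :
    ∀ A B : Set X, i A = A → i B = B → i (d (A ∪ B)) = i (d A) ∪ i (d B) := by
  intro A B hA hB
  have hAB : IsFixedPt i (A ∪ B) := isFixedPt_union_of_map_inter hi_inter hi_le hA hB
  rw [(isFixedPt_map_of_regular hreg hAB).eq, hd_union, (isFixedPt_map_of_regular hreg hA).eq,
    (isFixedPt_map_of_regular hreg hB).eq]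

/-- Proposition 4.2(1): every ◇-regular polyderivative CK4-space validates DP:
for `i`-open sets `A`, `B`, `i (d (A ∪ B)) = i (d A) ∪ i (d B)`. -/
theorem validates_DP {X : Type*} (i d : Set X → Set X)
    -- `i` is an interior operator
    (hi_univ : i Set.univ = Set.univ)
    (hi_inter : ∀ A B : Set X, i (A ∩ B) = i A ∩ i B)
    (hi_idem : ∀ A : Set X, i A ⊆ i (i A))
    (hi_le : ∀ A : Set X, i A ⊆ A)
    -- `d` is a `T_d`-derivative operator
    (hd_empty : d ∅ = ∅)
    (hd_union : ∀ A B : Set X, d (A ∪ B) = d A ∪ d B)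
    (hd_idem : ∀ A : Set X, d (d A) ⊆ d A)
    -- ◇-regularity
    (hreg : ∀ A : Set X, d (i A) = i (d (i A))) :
    ∀ A B : Set X, i A = A → i B = B → i (d (A ∪ B)) = i (d A) ∪ i (d B) :=
  validates_DP_general i d hi_inter hi_le hd_union hreg
end

section
/- Let X be a set, i an interior operator on X, d a T_d-derivative operator on X with dual integral operator e_◇ (given by e_◇(A) = X ∖ d(X ∖ A)), and E an integral operator on X. Assume: (a) ◇-regularity, d ∘ i = i ∘ d ∘ i; (b) ◇-coarseness, i ∘ e_◇ = E ∘ i; and (c) E(A) ⊆ e_◇(A) for all A ⊆ X. Then for all i-open sets A, B ⊆ X: i((X ∖ i(d(A))) ∪ E(B)) ⊆ E(i((X ∖ A) ∪ B)). (This is Proposition 4.2(2): every ◇-regular, ◇-coarse polyderivative CK4-space validates the Fischer Servi axiom FS: (◇φ→□ψ) → □(φ→ψ).) -/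
/-! Since `A` is open, regularity makes `d A` open, so the outer `i` in `(i (d A))ᶜ` can be
dropped. Then `(d A)ᶜ ∪ E B ⊆ e_◇ (Aᶜ ∪ B)`, because `d (A ∩ Bᶜ) ⊆ d A ∩ d Bᶜ` and `E ⊆ e_◇`;
applying `i` to this inclusion and using coarseness `i ∘ e_◇ = E ∘ i` gives the claim. -/

theorem derivative_isOpen_of_isOpen {X : Type*} {i d : Set X → Set X}
    (hreg : ∀ A : Set X, d (i A) = i (d (i A))) {A : Set X} (hA : i A = A) :
    i (d A) = d A := by
  rw [← hA, ← hreg]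

theorem compl_union_subset_dualDerivative {X : Type*} {d E : Set X → Set X} (hd : Monotone d)
    (hEsub : ∀ A : Set X, E A ⊆ (d Aᶜ)ᶜ) (A B : Set X) :
    (d A)ᶜ ∪ E B ⊆ (d (Aᶜ ∪ B)ᶜ)ᶜ := by
  rw [Set.compl_union, compl_compl]
  rintro x (hxA | hxB) hx
  · exact hxA (hd Set.inter_subset_left hx)
  · exact hEsub B hxB (hd Set.inter_subset_right hx)

theorem validates_FS_general {X : Type*} (i d E : Set X → Set X)
    -- `i` is an interior operator
    (hi_inter : ∀ A B : Set X, i (A ∩ B) = i A ∩ i B)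
    -- `d` is a `T_d`-derivative operator
    (hd_union : ∀ A B : Set X, d (A ∪ B) = d A ∪ d B)
    -- (a) ◇-regularity
    (hreg : ∀ A : Set X, d (i A) = i (d (i A)))
    -- (b) ◇-coarseness: `i ∘ e_◇ = E ∘ i`
    (hcoarse : ∀ A : Set X, i ((d Aᶜ)ᶜ) = E (i A))
    -- (c) `E A ⊆ e_◇ A`
    (hEsub : ∀ A : Set X, E A ⊆ (d Aᶜ)ᶜ) :
    ∀ A B : Set X, i A = A → i B = B →
      i ((i (d A))ᶜ ∪ E B) ⊆ E (i (Aᶜ ∪ B)) := by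
  intro A B hA _
  calc i ((i (d A))ᶜ ∪ E B) = i ((d A)ᶜ ∪ E B) := by rw [derivative_isOpen_of_isOpen hreg hA]
    _ ⊆ i ((d (Aᶜ ∪ B)ᶜ)ᶜ) :=
      Monotone.of_map_inf hi_inter
        (compl_union_subset_dualDerivative (Monotone.of_map_sup hd_union) hEsub A B)
    _ = E (i (Aᶜ ∪ B)) := hcoarse _

/-- Proposition 4.2(2): every ◇-regular, ◇-coarse polyderivative CK4-space
validates the Fischer Servi axiom FS.  Here `E` plays the role of `e_□` and
`fun A => (d Aᶜ)ᶜ` is the dual integral operator `e_◇` of `d`. -/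
theorem validates_FS {X : Type*} (i d E : Set X → Set X)
    -- `i` is an interior operator
    (hi_univ : i Set.univ = Set.univ)
    (hi_inter : ∀ A B : Set X, i (A ∩ B) = i A ∩ i B)
    (hi_idem : ∀ A : Set X, i A ⊆ i (i A))
    (hi_le : ∀ A : Set X, i A ⊆ A)
    -- `d` is a `T_d`-derivative operator
    (hd_empty : d ∅ = ∅)
    (hd_union : ∀ A B : Set X, d (A ∪ B) = d A ∪ d B)
    (hd_idem : ∀ A : Set X, d (d A) ⊆ d A)
    -- `E` is an integral operator
    (hE_univ : E Set.univ = Set.univ)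
    (hE_inter : ∀ A B : Set X, E (A ∩ B) = E A ∩ E B)
    (hE_idem : ∀ A : Set X, E A ⊆ E (E A))
    -- (a) ◇-regularity
    (hreg : ∀ A : Set X, d (i A) = i (d (i A)))
    -- (b) ◇-coarseness: `i ∘ e_◇ = E ∘ i`
    (hcoarse : ∀ A : Set X, i ((d Aᶜ)ᶜ) = E (i A))
    -- (c) `E A ⊆ e_◇ A`
    (hEsub : ∀ A : Set X, E A ⊆ (d Aᶜ)ᶜ) :
    ∀ A B : Set X, i A = A → i B = B →
      i ((i (d A))ᶜ ∪ E B) ⊆ E (i (Aᶜ ∪ B)) :=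
  validates_FS_general i d E hi_inter hd_union hreg hcoarse hEsub
end

section
/- Let X be a set, i an interior operator on X, d a T_d-derivative operator on X with dual integral operator e_◇ (given by e_◇(A) = X ∖ d(X ∖ A)), and E an integral operator on X. Assume: (a) ◇-regularity, d ∘ i = i ∘ d ∘ i; and (b) □-regularity, e_◇ ∘ i = E ∘ i. Then for all i-open sets A, B ⊆ X: E(A ∪ B) ⊆ E(A) ∪ i(d(B)). (This is Proposition 4.2(3): every □-regular and ◇-regular polyderivative CK4-space validates the Rodríguez–Vidal axiom RV: □(φ∨ψ) → □φ ∨ ◇ψ.) -/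
/-!
For `i`-open `A` and `B`, □-regularity turns both `E (A ∪ B)` and `E A` into values of the dual
`(d ·ᶜ)ᶜ`, and ◇-regularity makes `d B` itself `i`-open. What remains is the inequality
`(d (A ∪ B)ᶜ)ᶜ ⊆ (d Aᶜ)ᶜ ∪ d B`, which holds for every finitely additive `d`:
`Aᶜ ⊆ (A ∪ B)ᶜ ∪ B`, so `d Aᶜ ⊆ d (A ∪ B)ᶜ ∪ d B`.
-/

section Lattice

variable {α β : Type*}

theorem monotone_of_map_sup [SemilatticeSup α] [SemilatticeSup β] {f : α → β}
    (hf : ∀ a b, f (a ⊔ b) = f a ⊔ f b) : Monotone f := fun a b hab => by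
  rw [← sup_eq_right.mpr hab, hf]
  exact le_sup_left

theorem monotone_of_map_inf [SemilatticeInf α] [SemilatticeInf β] {f : α → β}
    (hf : ∀ a b, f (a ⊓ b) = f a ⊓ f b) : Monotone f := fun a b hab => by
  rw [← inf_eq_left.mpr hab, hf]
  exact inf_le_right

theorem map_sup_eq_self_of_map_eq_self [Lattice α] {f : α → α} (hf : ∀ a b, f (a ⊓ b) = f a ⊓ f b)
    (hf_le : ∀ a, f a ≤ a) {a b : α} (ha : f a = a) (hb : f b = b) : f (a ⊔ b) = a ⊔ b := by
  have hmono := monotone_of_map_inf hf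
  refine (hf_le _).antisymm (sup_le ?_ ?_)
  · exact ha.ge.trans (hmono le_sup_left)
  · exact hb.ge.trans (hmono le_sup_right)

theorem compl_map_compl_sup_le [BooleanAlgebra α] {d : α → α}
    (hd : ∀ a b, d (a ⊔ b) = d a ⊔ d b) (a b : α) :
    (d (a ⊔ b)ᶜ)ᶜ ≤ (d aᶜ)ᶜ ⊔ d b := by
  have hcompl : aᶜ ≤ (a ⊔ b)ᶜ ⊔ b := by
    rw [compl_sup, sup_comm, sup_inf_left, sup_compl_eq_top, inf_top_eq]
    exact le_sup_right
  have hd_compl : d aᶜ ≤ d (a ⊔ b)ᶜ ⊔ d b := hd _ b ▸ monotone_of_map_sup hd hcompl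
  rw [compl_le_iff_compl_le, compl_sup, compl_compl, ← sdiff_eq, sdiff_le_iff, sup_comm]
  exact hd_compl

end Lattice

theorem validates_RV_general {X : Type*} (i d E : Set X → Set X)
    -- `i` is an interior operator
    (hi_inter : ∀ A B : Set X, i (A ∩ B) = i A ∩ i B)
    (hi_le : ∀ A : Set X, i A ⊆ A)
    -- `d` is a `T_d`-derivative operator
    (hd_union : ∀ A B : Set X, d (A ∪ B) = d A ∪ d B)
    -- (a) ◇-regularity
    (hreg : ∀ A : Set X, d (i A) = i (d (i A)))
    -- (b) □-regularity: `e_◇ ∘ i = E ∘ i`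
    (hbox : ∀ A : Set X, (d (i A)ᶜ)ᶜ = E (i A)) :
    ∀ A B : Set X, i A = A → i B = B → E (A ∪ B) ⊆ E A ∪ i (d B) := by
  intro A B hA hB
  have hE_open : ∀ C, i C = C → E C = (d Cᶜ)ᶜ := fun C hC => by rw [← hC, hbox]
  have hdB_open : i (d B) = d B := by rw [← hB, ← hreg]
  rw [hE_open (A ∪ B) (map_sup_eq_self_of_map_eq_self hi_inter hi_le hA hB), hE_open A hA, hdB_open]
  exact compl_map_compl_sup_le hd_union A B

/-- Proposition 4.2(3): every □-regular and ◇-regular polyderivative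
CK4-space validates the Rodríguez–Vidal axiom RV.  Here `E` plays the role of `e_□` and
`fun A => (d Aᶜ)ᶜ` is the dual integral operator `e_◇` of `d`. -/
theorem validates_RV {X : Type*} (i d E : Set X → Set X)
    -- `i` is an interior operator
    (hi_univ : i Set.univ = Set.univ)
    (hi_inter : ∀ A B : Set X, i (A ∩ B) = i A ∩ i B)
    (hi_idem : ∀ A : Set X, i A ⊆ i (i A))
    (hi_le : ∀ A : Set X, i A ⊆ A)
    -- `d` is a `T_d`-derivative operator
    (hd_empty : d ∅ = ∅)
    (hd_union : ∀ A B : Set X, d (A ∪ B) = d A ∪ d B)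
    (hd_idem : ∀ A : Set X, d (d A) ⊆ d A)
    -- `E` is an integral operator
    (hE_univ : E Set.univ = Set.univ)
    (hE_inter : ∀ A B : Set X, E (A ∩ B) = E A ∩ E B)
    (hE_idem : ∀ A : Set X, E A ⊆ E (E A))
    -- (a) ◇-regularity
    (hreg : ∀ A : Set X, d (i A) = i (d (i A)))
    -- (b) □-regularity: `e_◇ ∘ i = E ∘ i`
    (hbox : ∀ A : Set X, (d (i A)ᶜ)ᶜ = E (i A)) :
    ∀ A B : Set X, i A = A → i B = B → E (A ∪ B) ⊆ E A ∪ i (d B) :=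
  validates_RV_general i d E hi_inter hi_le hd_union hreg hbox
end

section
/- Let ≼ be a preorder and ⊏ a transitive relation on a set W, and suppose the pair is backward confluent: whenever w ⊏ v and v ≼ v', there is w' with w ≼ w' ⊏ v'. Then the composite relation (≼;⊏) is transitive; consequently the transitive closure of (≼;⊏) equals (≼;⊏). (Lemma 5.4(1).) -/
namespace Relation

/-- `hback` says `s ; r ⊆ r ; s`: swap the middle of `r ; s ; r ; s`, then merge adjacent factors. -/
theorem isTrans_comp_of_backward_confluent {α : Type*} {r s : α → α → Prop}
    [IsTrans α r] [IsTrans α s]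
    (hback : ∀ {w v v'}, s w v → r v v' → ∃ w', r w w' ∧ s w' v') :
    IsTrans α (Comp r s) where
  trans _ _ _ := by
    rintro ⟨u, hau, hub⟩ ⟨v, hbv, hvc⟩
    obtain ⟨w, huw, hwv⟩ := hback hub hbv
    exact ⟨w, _root_.trans hau huw, _root_.trans hwv hvc⟩

end Relation

theorem backward_confluent_comp_trans_general {W : Type*} (pre mod : W → W → Prop)
    (hpre_trans : ∀ {a b c}, pre a b → pre b c → pre a c)
    (hmod_trans : ∀ {a b c}, mod a b → mod b c → mod a c)
    (hback : ∀ {w v v'}, mod w v → pre v v' → ∃ w', pre w w' ∧ mod w' v') :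
    (∀ {a b c}, (∃ u, pre a u ∧ mod u b) → (∃ u, pre b u ∧ mod u c) →
      (∃ u, pre a u ∧ mod u c))
    ∧ (∀ a b, Relation.TransGen (fun x y => ∃ u, pre x u ∧ mod u y) a b ↔
        ∃ u, pre a u ∧ mod u b) := by
  have : IsTrans W pre := ⟨fun _ _ _ => hpre_trans⟩
  have : IsTrans W mod := ⟨fun _ _ _ => hmod_trans⟩
  have hcomp : IsTrans W (Relation.Comp pre mod) :=
    Relation.isTrans_comp_of_backward_confluent hback
  exact ⟨fun hab hbc => hcomp.trans _ _ _ hab hbc,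
    fun a b => iff_of_eq (congrFun₂ (@Relation.transGen_eq_self _ _ hcomp) a b)⟩

/-- Lemma 5.4(1): if `≼` is a preorder, `⊏` is transitive, and the pair is
backward confluent, then the composite `(≼;⊏)` is transitive; consequently its transitive
closure equals `(≼;⊏)` itself. -/
theorem backward_confluent_comp_trans {W : Type*} (pre mod : W → W → Prop)
    (hpre_refl : ∀ w, pre w w)
    (hpre_trans : ∀ {a b c}, pre a b → pre b c → pre a c)
    (hmod_trans : ∀ {a b c}, mod a b → mod b c → mod a c)
    (hback : ∀ {w v v'}, mod w v → pre v v' → ∃ w', pre w w' ∧ mod w' v') :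
    (∀ {a b c}, (∃ u, pre a u ∧ mod u b) → (∃ u, pre b u ∧ mod u c) →
      (∃ u, pre a u ∧ mod u c))
    ∧ (∀ a b, Relation.TransGen (fun x y => ∃ u, pre x u ∧ mod u y) a b ↔
        ∃ u, pre a u ∧ mod u b) :=
  backward_confluent_comp_trans_general pre mod hpre_trans hmod_trans hback
end

section
/- Let ≼ be a preorder and ⊏ a reflexive transitive relation on a set W, and suppose the pair is downward confluent: whenever w ≼ v and v ⊏ v', there is w' with w ⊏ w' ≼ v'. Then the transitive closure of the composite (≼;⊏) equals the composite (⊏;≼). (Lemma 5.4(2), in the setting of CS4-frames where ⊏ is reflexive.) -/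
/-! Downward confluence says `≼;⊏ ⊆ ⊏;≼`. It also makes `⊏;≼` transitive (swap the middle
`≼;⊏` of `⊏;≼;⊏;≼`), so `⊏;≼` contains the transitive closure of `≼;⊏`; conversely, by
reflexivity, `⊏;≼ ⊆ (≼;⊏);(≼;⊏)`. -/

namespace Relation

variable {α : Type*} {r s : α → α → Prop}

theorem isTrans_comp_swap [IsTrans α r] [IsTrans α s] (h : Comp r s ≤ Comp s r) :
    IsTrans α (Comp s r) where
  trans _ b _ := by
    rintro ⟨u, hau, hub⟩ ⟨v, hbv, hvc⟩
    obtain ⟨w, huw, hwv⟩ := h u v ⟨b, hub, hbv⟩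
    exact ⟨w, _root_.trans hau huw, _root_.trans hwv hvc⟩

theorem transGen_comp_le_comp_swap [IsTrans α r] [IsTrans α s] (h : Comp r s ≤ Comp s r) :
    TransGen (Comp r s) ≤ Comp s r :=
  haveI := isTrans_comp_swap h
  transGen_minimal h

theorem comp_swap_le_transGen_comp [Std.Refl r] [Std.Refl s] :
    Comp s r ≤ TransGen (Comp r s) :=
  fun a b ⟨_, hau, hub⟩ => .head ⟨a, refl a, hau⟩ (.single ⟨b, hub, refl b⟩)

theorem transGen_comp_eq_comp_swap [Std.Refl r] [IsTrans α r] [Std.Refl s] [IsTrans α s]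
    (h : Comp r s ≤ Comp s r) : TransGen (Comp r s) = Comp s r :=
  le_antisymm (transGen_comp_le_comp_swap h) comp_swap_le_transGen_comp

end Relation

/-- Lemma 5.4(2), for reflexive `⊏`: if `≼` is a preorder, `⊏` is reflexive
and transitive, and the pair is downward confluent, then the transitive closure of the
composite `(≼;⊏)` equals the composite `(⊏;≼)`. -/
theorem downward_confluent_transGen_eq {W : Type*} (pre mod : W → W → Prop)
    (hpre_refl : ∀ w, pre w w)
    (hpre_trans : ∀ {a b c}, pre a b → pre b c → pre a c)
    (hmod_refl : ∀ w, mod w w)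
    (hmod_trans : ∀ {a b c}, mod a b → mod b c → mod a c)
    (hdown : ∀ {w v v'}, pre w v → mod v v' → ∃ w', mod w w' ∧ pre w' v') :
    ∀ a b, Relation.TransGen (fun x y => ∃ u, pre x u ∧ mod u y) a b ↔
      ∃ u, mod a u ∧ pre u b := by
  have : Std.Refl pre := ⟨hpre_refl⟩
  have : IsTrans W pre := ⟨fun _ _ _ => hpre_trans⟩
  have : Std.Refl mod := ⟨hmod_refl⟩
  have : IsTrans W mod := ⟨fun _ _ _ => hmod_trans⟩
  have hconf : Relation.Comp pre mod ≤ Relation.Comp mod pre :=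
    fun _ _ ⟨_, hpre, hmod⟩ => hdown hpre hmod
  intro a b
  exact Iff.of_eq (congrFun₂ (Relation.transGen_comp_eq_comp_swap hconf) a b)
end

section
/- Let R be an irreflexive and transitive relation on a set X, and equip X with the Alexandroff topology τ_R whose open sets are exactly the R-upward closed sets. Then for every A ⊆ X, the derived set of A (the set of accumulation points of A, i.e. {x : x ∈ closure(A ∖ {x})}) equals {w ∈ X : ∃v ∈ A, w R v}. (This identifies the relational derivative of an irreflexive transitive frame with the Cantor derivative of its associated Alexandroff space, as used in Proposition 6.5(2).) -/
/-! The smallest open neighbourhood of `x` in `τ_R` is the set of points reachable from `x`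
by finitely many `R`-steps, so `x` lies in the closure of `s` iff some point of `s` is
reachable from `x`. For transitive `R` "reachable" means "equal or `R`-related", and
irreflexivity lets us discard the point `x` itself. -/

/-- The Alexandroff topology `τ_R` associated with a relation `R`: the open sets
are exactly the `R`-upward closed sets. -/
def upTop {X : Type*} (R : X → X → Prop) : TopologicalSpace X where
  IsOpen U := ∀ ⦃w v⦄, w ∈ U → R w v → v ∈ U
  isOpen_univ := fun _ _ _ _ => trivial
  isOpen_inter := fun _ _ hU hV _ _ hw hr => ⟨hU hw.1 hr, hV hw.2 hr⟩
  isOpen_sUnion := fun _ hS _ _ hw hr => by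
    obtain ⟨U, hU, hwU⟩ := hw
    exact ⟨U, hU, hS U hU hwU hr⟩

open Topology Relation

namespace upTop

variable {X : Type*} (R : X → X → Prop)

theorem isOpen_setOf_reflTransGen (x : X) : IsOpen[upTop R] {v | ReflTransGen R x v} :=
  fun _ _ hw hr => hw.tail hr

variable {R}

theorem mem_of_reflTransGen {U : Set X} (hU : IsOpen[upTop R] U) {x v : X} (hx : x ∈ U)
    (hxv : ReflTransGen R x v) : v ∈ U := by
  induction hxv with
  | refl => exact hx
  | tail _ hr hw => exact hU hw hr

theorem mem_closure_iff_exists_reflTransGen {s : Set X} {x : X} :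
    x ∈ closure[upTop R] s ↔ ∃ v ∈ s, ReflTransGen R x v := by
  rw [@mem_closure_iff X (upTop R)]
  constructor
  · intro h
    obtain ⟨v, hxv, hvs⟩ := h _ (isOpen_setOf_reflTransGen R x) ReflTransGen.refl
    exact ⟨v, hvs, hxv⟩
  · rintro ⟨v, hvs, hxv⟩ U hU hxU
    exact ⟨v, mem_of_reflTransGen hU hxU hxv, hvs⟩

theorem mem_closure_iff_exists_eq_or_rel [IsTrans X R] {s : Set X} {x : X} :
    x ∈ closure[upTop R] s ↔ ∃ v ∈ s, v = x ∨ R x v := by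
  simp only [mem_closure_iff_exists_reflTransGen, reflTransGen_iff_eq_or_transGen,
    transGen_eq_self]

end upTop

/-- for an irreflexive transitive relation `R`, the derived set of `A`
(the set of points `x` with `x ∈ closure (A \ {x})`) in the Alexandroff space
`(X, τ_R)` equals `{w | ∃ v ∈ A, R w v}`. -/
theorem derivedSet_upTop {X : Type*} (R : X → X → Prop)
    (hirrefl : ∀ x, ¬ R x x)
    (htrans : ∀ {a b c}, R a b → R b c → R a c) :
    ∀ A : Set X, {x | x ∈ @closure X (upTop R) (A \ {x})} = {w | ∃ v ∈ A, R w v} := by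
  have : IsTrans X R := ⟨fun _ _ _ => htrans⟩
  intro A
  ext x
  simp only [Set.mem_ofPred_eq, upTop.mem_closure_iff_exists_eq_or_rel, Set.mem_sdiff,
    Set.mem_singleton_iff]
  constructor
  · rintro ⟨v, ⟨hvA, hvx⟩, hv | hxv⟩
    · exact absurd hv hvx
    · exact ⟨v, hvA, hxv⟩
  · rintro ⟨v, hvA, hxv⟩
    exact ⟨v, ⟨hvA, fun hvx => hirrefl x (hvx ▸ hxv)⟩, Or.inr hxv⟩
end

section
/- Let X be a set carrying two topologies τ_□ and τ_→ such that every τ_□-open set is τ_→-open. For Q ⊆ X define e_□(Q) = {x ∈ X : there is a τ_□-open set U with x ∈ U and U ∖ {x} ⊆ Q} (the complement of the τ_□-derived set of X ∖ Q). Then for all P, Q ⊆ X: e_□(Q) ⊆ P ∪ int_{τ_→}((X ∖ P) ∪ Q), where int_{τ_→} is the τ_→-interior. (Lemma 6.2: any derivative space induced from a tritopological space with τ_□ ⊆ τ_→ validates □q → p ∨ (p → q).) -/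
open Topology

theorem Set.diff_singleton_subset_compl_union {X : Type*} {U P Q : Set X} {x : X}
    (hUQ : U \ {x} ⊆ Q) (hxP : x ∉ P) : U ⊆ Pᶜ ∪ Q := by
  intro y hy
  by_cases hyx : y = x
  · exact Or.inl (hyx ▸ hxP)
  · exact Or.inr (hUQ ⟨hy, hyx⟩)

/-- Lemma 6.2: let `X` carry two topologies `tb = τ_□` and `tr = τ_→` with
every `τ_□`-open set `τ_→`-open.  Define `e_□ Q` as the set of points having a `τ_□`-open
neighbourhood `U` with `U \ {x} ⊆ Q` (the coderivative of `τ_□`).  Then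
`e_□ Q ⊆ P ∪ int_{τ_→}(Pᶜ ∪ Q)` for all `P, Q ⊆ X`, i.e. the space validates
`□q → p ∨ (p → q)`. -/
theorem coderivative_subset {X : Type*} (tb tr : TopologicalSpace X)
    (hsub : ∀ U : Set X, IsOpen[tb] U → IsOpen[tr] U) :
    ∀ P Q : Set X,
      {x | ∃ U : Set X, IsOpen[tb] U ∧ x ∈ U ∧ U \ {x} ⊆ Q} ⊆
        P ∪ @interior X tr (Pᶜ ∪ Q) := by
  intro P Q x ⟨U, hU, hxU, hUQ⟩
  by_cases hxP : x ∈ P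
  · exact Or.inl hxP
  · exact Or.inr <| @mem_interior X tr _ _ |>.2
      ⟨U, Set.diff_singleton_subset_compl_union hUQ hxP, hsub U hU, hxU⟩
end

section
/- Let ≼ be a preorder and ⊏ a transitive relation on a set W, let ≪ be the transitive closure of the composite (≼;⊏), and suppose the pair is backward confluent: w ⊏ v ≼ v' implies there is w' with w ≼ w' ⊏ v'. Then for every X ⊆ W: i_≼(e_⊏(X)) = e_≪(i_≼(X)). (Proposition 6.6(1): backward confluent frames give rise to ◇-coarse spaces.) -/
/-!
Backward confluence rewrites a `⊏`-step followed by a `≼`-step as a `≼`-step followed by a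
`⊏`-step. Together with transitivity of `≼` and `⊏` this makes `(≼;⊏)` transitive, so that
`≪ = (≼;⊏)`, and lets `(≼;⊏)` absorb a trailing `≼`-step, so that `(≼;⊏);≼ = (≼;⊏)`.
Since boxes turn composition of relations into composition of operators,
`i_≼ (e_⊏ X) = e_(≼;⊏) X = e_((≼;⊏);≼) X = e_≪ (i_≼ X)`.
-/

open Relation

def boxSet {α β : Type*} (R : α → β → Prop) (X : Set β) : Set α :=
  {a | ∀ b, R a b → b ∈ X}

theorem boxSet_comp {α β γ : Type*} (r : α → β → Prop) (s : β → γ → Prop) (X : Set γ) :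
    boxSet (Comp r s) X = boxSet r (boxSet s X) := by
  ext a
  exact ⟨fun h b hab c hbc => h c ⟨b, hab, hbc⟩, fun h c ⟨b, hab, hbc⟩ => h b hab c hbc⟩

section BackwardConfluent

variable {W : Type*} {pre mod : W → W → Prop}

theorem comp_comp_eq_of_backward_confluent (hpre_refl : ∀ w, pre w w)
    (hpre_trans : ∀ {a b c}, pre a b → pre b c → pre a c)
    (hback : ∀ {w v v'}, mod w v → pre v v' → ∃ w', pre w w' ∧ mod w' v') :
    Comp (Comp pre mod) pre = Comp pre mod := by
  funext w t
  refine propext ⟨?_, fun hwt => ⟨t, hwt, hpre_refl t⟩⟩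
  rintro ⟨v, ⟨u, hwu, huv⟩, hvt⟩
  obtain ⟨u', huu', hu't⟩ := hback huv hvt
  exact ⟨u', hpre_trans hwu huu', hu't⟩

theorem isTrans_comp_of_backward_confluent (hpre_trans : ∀ {a b c}, pre a b → pre b c → pre a c)
    (hmod_trans : ∀ {a b c}, mod a b → mod b c → mod a c)
    (hback : ∀ {w v v'}, mod w v → pre v v' → ∃ w', pre w w' ∧ mod w' v') :
    IsTrans W (Comp pre mod) := by
  refine ⟨?_⟩
  rintro w v t ⟨u, hwu, huv⟩ ⟨u₂, hvu₂, hu₂t⟩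
  obtain ⟨u', huu', hu'u₂⟩ := hback huv hvu₂
  exact ⟨u', hpre_trans hwu huu', hmod_trans hu'u₂ hu₂t⟩

end BackwardConfluent

/-- Proposition 6.6(1): for a preorder `≼` and a transitive relation `⊏`
which are backward confluent, with `≪` the transitive closure of `(≼;⊏)`:
`i_≼ (e_⊏ X) = e_≪ (i_≼ X)` for every `X ⊆ W`  (◇-coarseness). -/
theorem backward_confluent_coarse {W : Type*} (pre mod : W → W → Prop)
    (hpre_refl : ∀ w, pre w w)
    (hpre_trans : ∀ {a b c}, pre a b → pre b c → pre a c)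
    (hmod_trans : ∀ {a b c}, mod a b → mod b c → mod a c)
    (hback : ∀ {w v v'}, mod w v → pre v v' → ∃ w', pre w w' ∧ mod w' v') :
    ∀ X : Set W,
      {w | ∀ v, pre w v → v ∈ {u | ∀ t, mod u t → t ∈ X}} =
      {w | ∀ v, Relation.TransGen (fun a b => ∃ u, pre a u ∧ mod u b) w v →
        v ∈ {u | ∀ t, pre u t → t ∈ X}} := by
  intro X
  have hcomp_trans := isTrans_comp_of_backward_confluent @hpre_trans @hmod_trans @hback
  show boxSet pre (boxSet mod X) = boxSet (TransGen (Comp pre mod)) (boxSet pre X)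
  rw [transGen_eq_self, ← boxSet_comp, ← boxSet_comp,
    comp_comp_eq_of_backward_confluent hpre_refl @hpre_trans @hback]
end

section
/- Let ≼ be a preorder and ⊏ a transitive relation on a set W, and suppose the pair is forward confluent: whenever w ⊏ v and w ≼ w', there is v' with w' ⊏ v' and v ≼ v'. Then for every X ⊆ W: d_⊏(i_≼(X)) = i_≼(d_⊏(i_≼(X))). (Proposition 6.6(2): forward confluent frames give rise to ◇-regular spaces.) -/
/-! Forward confluence transports a `⊏`-successor of `w` along `w ≼ w'`, and `i_≼ X` is
`≼`-upward closed by transitivity, so `d_⊏ (i_≼ X)` is `≼`-upward closed; for upward closed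
sets `i_≼` is the identity, by reflexivity. -/

section

variable {W : Type*} (pre : W → W → Prop)

theorem mem_of_forall_pre_imp_mem (hpre_refl : ∀ w, pre w w) {Y : Set W} {w : W}
    (hw : ∀ v, pre w v → v ∈ Y) : w ∈ Y :=
  hw w (hpre_refl w)

theorem forall_pre_imp_mem_of_pre {X : Set W}
    (hpre_trans : ∀ {a b c}, pre a b → pre b c → pre a c) {u v : W}
    (hu : ∀ t, pre u t → t ∈ X) (huv : pre u v) : ∀ t, pre v t → t ∈ X :=
  fun t hvt => hu t (hpre_trans huv hvt)

end

theorem forward_confluent_regular_general {W : Type*} (pre mod : W → W → Prop)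
    (hpre_refl : ∀ w, pre w w)
    (hpre_trans : ∀ {a b c}, pre a b → pre b c → pre a c)
    (hforward : ∀ {w v w'}, mod w v → pre w w' → ∃ v', mod w' v' ∧ pre v v') :
    ∀ X : Set W,
      {w | ∃ v, mod w v ∧ v ∈ {u | ∀ t, pre u t → t ∈ X}} =
      {w | ∀ v, pre w v → v ∈ {u | ∃ s, mod u s ∧ s ∈ {r | ∀ t, pre r t → t ∈ X}}} := by
  intro X
  ext w
  constructor
  · rintro ⟨v, hwv, hv⟩ w' hww'
    obtain ⟨v', hw'v', hvv'⟩ := hforward hwv hww'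
    exact ⟨v', hw'v', forall_pre_imp_mem_of_pre pre hpre_trans hv hvv'⟩
  · exact mem_of_forall_pre_imp_mem pre hpre_refl

/-- Proposition 6.6(2): for a preorder `≼` and a transitive relation `⊏`
which are forward confluent: `d_⊏ (i_≼ X) = i_≼ (d_⊏ (i_≼ X))` for every `X ⊆ W`
(◇-regularity). -/
theorem forward_confluent_regular {W : Type*} (pre mod : W → W → Prop)
    (hpre_refl : ∀ w, pre w w)
    (hpre_trans : ∀ {a b c}, pre a b → pre b c → pre a c)
    (hmod_trans : ∀ {a b c}, mod a b → mod b c → mod a c)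
    (hforward : ∀ {w v w'}, mod w v → pre w w' → ∃ v', mod w' v' ∧ pre v v') :
    ∀ X : Set W,
      {w | ∃ v, mod w v ∧ v ∈ {u | ∀ t, pre u t → t ∈ X}} =
      {w | ∀ v, pre w v → v ∈ {u | ∃ s, mod u s ∧ s ∈ {r | ∀ t, pre r t → t ∈ X}}} :=
  forward_confluent_regular_general pre mod hpre_refl hpre_trans hforward
end

section
/- Let ≼ be a preorder and ⊏ a transitive relation on a set W, let ≪ be the transitive closure of the composite (≼;⊏), and suppose the pair is downward confluent: w ≼ v ⊏ v' implies there is w' with w ⊏ w' ≼ v'. Then for every X ⊆ W: e_⊏(i_≼(X)) = e_≪(i_≼(X)). (Proposition 6.6(3): downward confluent frames give rise to □-regular spaces.) -/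
/-!
Downward confluence says `(≼;⊏) ⊆ (⊏;≼)`, and it also makes `(⊏;≼)` transitive, so the transitive
closure `≪` of `(≼;⊏)` is still contained in `(⊏;≼)`. Since `i_≼ X` is `≼`-upward closed, a `≪`-step
out of a world can be replaced by a `⊏`-step into `i_≼ X`; conversely `⊏ ⊆ ≪` by reflexivity of `≼`.
-/

namespace Relation

variable {W : Type*} {pre mod : W → W → Prop}

theorem isTrans_comp_of_comp_le [IsTrans W pre] [IsTrans W mod]
    (hdown : Comp pre mod ≤ Comp mod pre) : IsTrans W (Comp mod pre) where
  trans _ _ _ := fun ⟨_, hab, hbc⟩ ⟨_, hcd, hde⟩ ↦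
    let ⟨b', hbb', hb'd⟩ := hdown _ _ ⟨_, hbc, hcd⟩
    ⟨b', _root_.trans hab hbb', _root_.trans hb'd hde⟩

theorem transGen_comp_le_of_comp_le [IsTrans W pre] [IsTrans W mod]
    (hdown : Comp pre mod ≤ Comp mod pre) : TransGen (Comp pre mod) ≤ Comp mod pre :=
  have := isTrans_comp_of_comp_le hdown
  transGen_minimal hdown

theorem forall_transGen_comp_iff_of_comp_le [Std.Refl pre] [IsTrans W pre] [IsTrans W mod]
    (hdown : Comp pre mod ≤ Comp mod pre) {Y : Set W} (hY : ∀ {u t}, pre u t → u ∈ Y → t ∈ Y)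
    (w : W) : (∀ v, TransGen (Comp pre mod) w v → v ∈ Y) ↔ ∀ v, mod w v → v ∈ Y := by
  refine ⟨fun h v hv ↦ h v (.single ⟨w, refl w, hv⟩), fun h v hv ↦ ?_⟩
  obtain ⟨b, hwb, hbv⟩ := transGen_comp_le_of_comp_le hdown w v hv
  exact hY hbv (h b hwb)

end Relation

/-- Proposition 6.6(3): for a preorder `≼` and a transitive relation `⊏`
which are downward confluent, with `≪` the transitive closure of `(≼;⊏)`:
`e_⊏ (i_≼ X) = e_≪ (i_≼ X)` for every `X ⊆ W`  (□-regularity). -/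
theorem downward_confluent_box_regular {W : Type*} (pre mod : W → W → Prop)
    (hpre_refl : ∀ w, pre w w)
    (hpre_trans : ∀ {a b c}, pre a b → pre b c → pre a c)
    (hmod_trans : ∀ {a b c}, mod a b → mod b c → mod a c)
    (hdown : ∀ {w v v'}, pre w v → mod v v' → ∃ w', mod w w' ∧ pre w' v') :
    ∀ X : Set W,
      {w | ∀ v, mod w v → v ∈ {u | ∀ t, pre u t → t ∈ X}} =
      {w | ∀ v, Relation.TransGen (fun a b => ∃ u, pre a u ∧ mod u b) w v →
        v ∈ {u | ∀ t, pre u t → t ∈ X}} := by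
  intro X
  have : Std.Refl pre := ⟨hpre_refl⟩
  have : IsTrans W pre := ⟨fun _ _ _ ↦ hpre_trans⟩
  have : IsTrans W mod := ⟨fun _ _ _ ↦ hmod_trans⟩
  have hcomp : Relation.Comp pre mod ≤ Relation.Comp mod pre :=
    fun _ _ ⟨_, hpre, hmod⟩ ↦ hdown hpre hmod
  ext w
  exact (Relation.forall_transGen_comp_iff_of_comp_le hcomp (Y := {u | ∀ t, pre u t → t ∈ X})
    (fun hut hu s hts ↦ hu s (hpre_trans hut hts)) w).symm
end

section
/- Let M = ⟨W, ≼, ⊏, V⟩ be a birelational CK4-model. Define M^irr on the set W × ℤ by: (w,n) ≼' (v,m) iff w ≼ v; (w,n) ⊏' (v,m) iff w ⊏ v and n < m; and V'(p) = {(w,n) : w ∈ V(p)}. Then: (i) ≼' is a preorder and ⊏' is transitive and irreflexive, so M^irr is a birelational CK4-model with irreflexive modal relation; (ii) if M is forward confluent (resp. backward confluent, downward confluent, locally linear), so is M^irr; and (iii) for every formula φ, every w ∈ W and every n ∈ ℤ: M^irr, (w,n) ⊨ φ if and only if M, w ⊨ φ. (The irreflexivization construction in the proof of Theorem 6.8.)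 -/
/-- Modal formulas of intuitionistic modal logic. -/
inductive Fml : Type where
  | bot : Fml
  | var : ℕ → Fml
  | and : Fml → Fml → Fml
  | or : Fml → Fml → Fml
  | imp : Fml → Fml → Fml
  | box : Fml → Fml
  | dia : Fml → Fml

/-- The relation `≪`, the transitive closure of the composite `(≼;⊏)`. -/
def ll {W : Type*} (pre mod : W → W → Prop) : W → W → Prop :=
  Relation.TransGen (fun a b => ∃ u, pre a u ∧ mod u b)

/-- Satisfaction in a birelational model. -/
def Sat {W : Type*} (pre mod : W → W → Prop) (V : ℕ → Set W) : Fml → W → Prop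
  | .bot, _ => False
  | .var n, w => w ∈ V n
  | .and φ ψ, w => Sat pre mod V φ w ∧ Sat pre mod V ψ w
  | .or φ ψ, w => Sat pre mod V φ w ∨ Sat pre mod V ψ w
  | .imp φ ψ, w => ∀ v, pre w v → Sat pre mod V φ v → Sat pre mod V ψ v
  | .box φ, w => ∀ v, ll pre mod w v → Sat pre mod V φ v
  | .dia φ, w => ∀ v, pre w v → ∃ u, mod v u ∧ Sat pre mod V φ u

def Forward {W : Type*} (pre mod : W → W → Prop) : Prop :=
  ∀ {w v w'}, mod w v → pre w w' → ∃ v', mod w' v' ∧ pre v v'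

def Backward {W : Type*} (pre mod : W → W → Prop) : Prop :=
  ∀ {w v v'}, mod w v → pre v v' → ∃ w', pre w w' ∧ mod w' v'

def Downward {W : Type*} (pre mod : W → W → Prop) : Prop :=
  ∀ {w v v'}, pre w v → mod v v' → ∃ w', mod w w' ∧ pre w' v'

def LocLinear {W : Type*} (pre : W → W → Prop) : Prop :=
  ∀ {w v u}, pre w v → pre w u → pre v u ∨ pre u v

/-- The intuitionistic relation of the irreflexivization `M^irr` on `W × ℤ`. -/
def irrPre {W : Type*} (pre : W → W → Prop) : W × ℤ → W × ℤ → Prop :=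
  fun a b => pre a.1 b.1

/-- The modal relation of the irreflexivization `M^irr` on `W × ℤ`. -/
def irrMod {W : Type*} (mod : W → W → Prop) : W × ℤ → W × ℤ → Prop :=
  fun a b => mod a.1 b.1 ∧ a.2 < b.2

/-- The valuation of the irreflexivization `M^irr`. -/
def irrVal {W : Type*} (V : ℕ → Set W) : ℕ → Set (W × ℤ) :=
  fun n => {a | a.1 ∈ V n}

/-! The projection `(w, n) ↦ w` maps both relations of `M^irr` onto those of `M`; conversely a
`≼`-step of `M` lifts at the same level and a `⊏`-step lifts from level `n` to level `n + 1`
(for backward confluence, down to level `n - 1`), because `ℤ` is unbounded. So `M^irr` and `M`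
agree on `→`, `□` and `◇`, and satisfaction is invariant by induction on the formula. -/

section Irreflexivization

variable {W : Type*} {pre mod : W → W → Prop}

theorem Forward.irr (h : Forward pre mod) : Forward (irrPre pre) (irrMod mod) := by
  rintro a b a' ⟨hab, -⟩ haa'
  obtain ⟨v', hmod, hpre⟩ := h hab haa'
  exact ⟨(v', a'.2 + 1), ⟨hmod, lt_add_one a'.2⟩, hpre⟩

theorem Backward.irr (h : Backward pre mod) : Backward (irrPre pre) (irrMod mod) := by
  rintro a b b' ⟨hab, -⟩ hbb'
  obtain ⟨w', hpre, hmod⟩ := h hab hbb'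
  exact ⟨(w', b'.2 - 1), hpre, hmod, sub_one_lt b'.2⟩

theorem Downward.irr (h : Downward pre mod) : Downward (irrPre pre) (irrMod mod) := by
  rintro a b b' hab ⟨hbb', -⟩
  obtain ⟨w', hmod, hpre⟩ := h hab hbb'
  exact ⟨(w', a.2 + 1), ⟨hmod, lt_add_one a.2⟩, hpre⟩

theorem LocLinear.irr (h : LocLinear pre) : LocLinear (irrPre (W := W) pre) :=
  fun hab hac => h hab hac

theorem ll_irr_fst {a b : W × ℤ} (h : ll (irrPre pre) (irrMod mod) a b) :
    ll pre mod a.1 b.1 := by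
  induction h with
  | single hab =>
    obtain ⟨u, hpre, hmod, -⟩ := hab
    exact .single ⟨u.1, hpre, hmod⟩
  | tail _ hbc ih =>
    obtain ⟨u, hpre, hmod, -⟩ := hbc
    exact ih.tail ⟨u.1, hpre, hmod⟩

theorem exists_ll_irr {w v : W} (h : ll pre mod w v) (n : ℤ) :
    ∃ m, ll (irrPre pre) (irrMod mod) (w, n) (v, m) := by
  induction h with
  | single hwv =>
    obtain ⟨u, hpre, hmod⟩ := hwv
    exact ⟨n + 1, .single ⟨(u, n), hpre, hmod, lt_add_one n⟩⟩
  | tail _ hvu ih =>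
    obtain ⟨m, hm⟩ := ih
    obtain ⟨u, hpre, hmod⟩ := hvu
    exact ⟨m + 1, hm.tail ⟨(u, m), hpre, hmod, lt_add_one m⟩⟩

theorem sat_irr_iff (V : ℕ → Set W) (φ : Fml) (w : W) (n : ℤ) :
    Sat (irrPre pre) (irrMod mod) (irrVal V) φ (w, n) ↔ Sat pre mod V φ w := by
  induction φ generalizing w n with
  | bot | var => rfl
  | and φ ψ ihφ ihψ => exact and_congr (ihφ w n) (ihψ w n)
  | or φ ψ ihφ ihψ => exact or_congr (ihφ w n) (ihψ w n)
  | imp φ ψ ihφ ihψ =>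
    constructor
    · intro h v hwv hφ
      exact (ihψ v n).mp (h (v, n) hwv ((ihφ v n).mpr hφ))
    · rintro h ⟨v, m⟩ hwv hφ
      exact (ihψ v m).mpr (h v hwv ((ihφ v m).mp hφ))
  | box φ ih =>
    constructor
    · intro h v hwv
      obtain ⟨m, hm⟩ := exists_ll_irr hwv n
      exact (ih v m).mp (h (v, m) hm)
    · rintro h ⟨v, m⟩ hwv
      exact (ih v m).mpr (h v (ll_irr_fst hwv))
  | dia φ ih =>
    constructor
    · intro h v hwv
      obtain ⟨⟨u, m⟩, ⟨hvu, -⟩, hu⟩ := h (v, n) hwv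
      exact ⟨u, hvu, (ih u m).mp hu⟩
    · rintro h ⟨v, m⟩ hwv
      obtain ⟨u, hvu, hu⟩ := h v hwv
      exact ⟨(u, m + 1), ⟨hvu, lt_add_one m⟩, (ih u (m + 1)).mpr hu⟩

end Irreflexivization

/-- irreflexivization, Theorem 6.8: given a birelational CK4-model
`M = ⟨W, ≼, ⊏, V⟩`, the model `M^irr` on `W × ℤ` is a CK4-model with irreflexive modal
relation, inherits the confluence/linearity properties of `M`, and satisfies exactly the
same formulas: `M^irr, (w,n) ⊨ φ ↔ M, w ⊨ φ`. -/
theorem irreflexivization {W : Type*} (pre mod : W → W → Prop) (V : ℕ → Set W)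
    (hpre_refl : ∀ w, pre w w)
    (hpre_trans : ∀ {a b c}, pre a b → pre b c → pre a c)
    (hmod_trans : ∀ {a b c}, mod a b → mod b c → mod a c)
    (hval : ∀ n, ∀ {w v}, w ∈ V n → pre w v → v ∈ V n) :
    -- (i)  `M^irr` is a birelational CK4-model with irreflexive modal relation
    ((∀ a, irrPre pre a a)
      ∧ (∀ {a b c : W × ℤ}, irrPre pre a b → irrPre pre b c → irrPre pre a c)
      ∧ (∀ {a b c : W × ℤ}, irrMod mod a b → irrMod mod b c → irrMod mod a c)
      ∧ (∀ a : W × ℤ, ¬ irrMod mod a a)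
      ∧ (∀ n, ∀ {a b : W × ℤ}, a ∈ irrVal V n → irrPre pre a b → b ∈ irrVal V n))
    -- (ii) preservation of the frame conditions
    ∧ (Forward pre mod → Forward (irrPre pre) (irrMod mod))
    ∧ (Backward pre mod → Backward (irrPre pre) (irrMod mod))
    ∧ (Downward pre mod → Downward (irrPre pre) (irrMod mod))
    ∧ (LocLinear pre → LocLinear (irrPre (W := W) pre))
    -- (iii) `M^irr` and `M` satisfy the same formulas
    ∧ (∀ (φ : Fml) (w : W) (n : ℤ),
        Sat (irrPre pre) (irrMod mod) (irrVal V) φ (w, n) ↔ Sat pre mod V φ w) := by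
  refine ⟨⟨fun a => hpre_refl a.1, hpre_trans,
      fun hab hbc => ⟨hmod_trans hab.1 hbc.1, hab.2.trans hbc.2⟩,
      fun a h => lt_irrefl _ h.2, fun n => hval n⟩,
    Forward.irr, Backward.irr, Downward.irr, LocLinear.irr, sat_irr_iff V⟩
end

section
/- Let X be a finite topological space satisfying the T₀ separation axiom. Then for every subset A ⊆ X, the derived set of A is contained in the derived set of A ∖ (derived set of A), i.e. d(A) ⊆ d(A ∖ d(A)). (This is the semantic form of Löb's axiom □(□p→p)→□p; it underlies Proposition 6.9, that finite T₀ spaces validate Löb's axiom.) -/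
/-! In a finite space the closure of a set is the set of specializations of its points, so
`x ∈ d(A)` means that some `y ∈ A` other than `x` specializes to `x`. Given such an `x`, pick among
those `y` one that is minimal for specialization. Then `y ∉ d(A)`: a point `w ≠ y` of `A`
specializing to `y` also specializes to `x`, and `w ≠ x` since specialization is antisymmetric in a
T₀ space, so `w` would be a candidate strictly below `y`. -/

/-- The derived set of `A`: points `x` all of whose open neighbourhoods meet `A \ {x}`. -/
def dset {X : Type*} [TopologicalSpace X] (A : Set X) : Set X :=
  {x | x ∈ closure (A \ {x})}

section

variable {X : Type*} [TopologicalSpace X]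

lemma AlexandrovDiscrete.mem_closure_iff_exists_specializes [AlexandrovDiscrete X] {s : Set X}
    {x : X} : x ∈ closure s ↔ ∃ y ∈ s, y ⤳ x := by
  conv_lhs => rw [← Set.biUnion_of_singleton s]
  simp only [closure_iUnion, Set.mem_iUnion, specializes_iff_mem_closure, exists_prop]

lemma mem_dset_iff [AlexandrovDiscrete X] {A : Set X} {x : X} :
    x ∈ dset A ↔ ∃ y ∈ A, y ≠ x ∧ y ⤳ x := by
  simp only [dset, Set.mem_ofPred_eq, AlexandrovDiscrete.mem_closure_iff_exists_specializes,
    Set.mem_sdiff, Set.mem_singleton_iff, and_assoc]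

lemma Set.Finite.exists_mem_forall_specializes_eq [T0Space X] {s : Set X} (hs : s.Finite)
    (hne : s.Nonempty) : ∃ y ∈ s, ∀ w ∈ s, w ⤳ y → w = y := by
  obtain ⟨_, ⟨y, hy, rfl⟩, hmax⟩ := (hs.image Specialization.toEquiv).exists_maximal (hne.image _)
  exact ⟨y, hy, fun w hw hwy => (hwy.antisymm (hmax ⟨w, hw, rfl⟩ hwy)).eq⟩

end

/-- in a finite T₀ space, `d(A) ⊆ d(A \ d(A))` for every `A`
(the semantic form of Löb's axiom, Proposition 6.9). -/
theorem finite_t0_loeb {X : Type*} [TopologicalSpace X] [Finite X] [T0Space X]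
    (A : Set X) : dset A ⊆ dset (A \ dset A) := by
  intro x hx
  rw [mem_dset_iff] at hx ⊢
  obtain ⟨y, ⟨hyA, hyx, hy⟩, hmin⟩ :=
    (Set.toFinite {y | y ∈ A ∧ y ≠ x ∧ y ⤳ x}).exists_mem_forall_specializes_eq hx
  refine ⟨y, ⟨hyA, fun hyd => ?_⟩, hyx, hy⟩
  obtain ⟨w, hwA, hwy, hw⟩ := mem_dset_iff.1 hyd
  have hwx : w ≠ x := by
    rintro rfl
    exact hyx (hy.antisymm hw).eq
  exact hwy (hmin w ⟨hwA, hwx, hw.trans hy⟩ hw)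
end
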